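/- Let ω be a countably incomplete ultrafilter, and let Q(X) be the set of all bounded operators T on ℓ²(X) such that both T and T* satisfy the uniform finite-approximation property of Proposition 1(2). Then Q(X) is a C*-subalgebra of B(ℓ²(X)): it is norm-closed, closed under adjoints, sums, and products. -/

import Mathlib

noncomputable section
open scoped ENNReal
open Filter

/-- The Hilbert space ℓ²(X). -/
abbrev L2 (X : Type*) := lp (fun _ : X => ℂ) 2

/-- The Dirac function δ_x ∈ ℓ²(X). -/
noncomputable def dirac {X : Type*} (x : X) : L2 X := by
  classical exact lp.single 2 x 1

/-- The uniform finite-approximation property of Proposition 1(2). -/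
def UniformApprox {X : Type*} (T : L2 X →L[ℂ] L2 X) : Prop :=
  ∀ ε : ℝ, 0 < ε → ∃ M : ℕ, ∀ x : X, ∃ v : L2 X,
    (∃ s : Finset X, s.card ≤ M ∧ ∀ y ∉ s, v y = 0) ∧ ‖T (dirac x) - v‖ < ε

lemma dirac_apply_self {X : Type*} (x : X) : (dirac x : L2 X) x = 1 := by
  classical
  unfold dirac
  exact lp.single_apply_self 2 x 1

lemma dirac_apply_ne {X : Type*} {x z : X} (h : z ≠ x) : (dirac x : L2 X) z = 0 := by
  classical
  unfold dirac
  exact lp.single_apply_ne 2 x 1 h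

lemma norm_dirac {X : Type*} (x : X) : ‖dirac x‖ = 1 := by
  classical
  have := lp.norm_single (E := fun _ : X => ℂ) (p := 2) (by norm_num) x (1:ℂ)
  simpa [dirac] using this

lemma eq_sum_dirac {X : Type*} [DecidableEq X] (v : L2 X) (s : Finset X)
    (h : ∀ y ∉ s, v y = 0) : v = ∑ y ∈ s, v y • dirac y := by
  classical
  refine lp.ext (funext fun z => ?_)
  rw [lp.coeFn_sum, Finset.sum_apply]
  have : ∀ y ∈ s, (v y • dirac y : L2 X) z = if z = y then v z else 0 := by
    intro y _
    rw [lp.coeFn_smul, Pi.smul_apply]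
    by_cases hz : z = y
    · subst hz; simp [dirac_apply_self]
    · rw [smul_eq_mul, dirac_apply_ne hz, mul_zero, if_neg hz]
  rw [Finset.sum_congr rfl this, Finset.sum_ite_eq]
  by_cases hz : z ∈ s
  · simp [hz]
  · simp [hz, h z hz]

lemma UA_add {X : Type*} {T S : L2 X →L[ℂ] L2 X} (hT : UniformApprox T)
    (hS : UniformApprox S) : UniformApprox (T + S) := by
  intro ε hε
  obtain ⟨M₁, h₁⟩ := hT (ε/2) (by positivity)
  obtain ⟨M₂, h₂⟩ := hS (ε/2) (by positivity)
  refine ⟨M₁ + M₂, fun x => ?_⟩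
  obtain ⟨v₁, ⟨s₁, hc₁, h0₁⟩, hv₁⟩ := h₁ x
  obtain ⟨v₂, ⟨s₂, hc₂, h0₂⟩, hv₂⟩ := h₂ x
  classical
  refine ⟨v₁ + v₂, ⟨s₁ ∪ s₂, ?_, ?_⟩, ?_⟩
  · exact (Finset.card_union_le s₁ s₂).trans (add_le_add hc₁ hc₂)
  · intro y hy
    rw [Finset.mem_union, not_or] at hy
    have : (v₁ + v₂ : L2 X) y = v₁ y + v₂ y := rfl
    rw [this, h0₁ y hy.1, h0₂ y hy.2, add_zero]
  · have : (T + S) (dirac x) - (v₁ + v₂) = (T (dirac x) - v₁) + (S (dirac x) - v₂) := by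
      simp [ContinuousLinearMap.add_apply]; abel
    rw [this]
    calc ‖(T (dirac x) - v₁) + (S (dirac x) - v₂)‖
        ≤ ‖T (dirac x) - v₁‖ + ‖S (dirac x) - v₂‖ := norm_add_le _ _
      _ < ε/2 + ε/2 := add_lt_add hv₁ hv₂
      _ = ε := by ring

lemma UA_smul {X : Type*} (c : ℂ) {T : L2 X →L[ℂ] L2 X} (hT : UniformApprox T) :
    UniformApprox (c • T) := by
  intro ε hε
  by_cases hc : c = 0
  · refine ⟨0, fun x => ⟨0, ⟨∅, le_refl _, fun y _ => rfl⟩, ?_⟩⟩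
    simp [hc, hε]
  · have hcn : 0 < ‖c‖ := norm_pos_iff.mpr hc
    obtain ⟨M, h⟩ := hT (ε/‖c‖) (by positivity)
    refine ⟨M, fun x => ?_⟩
    obtain ⟨v, ⟨s, hc₁, h0⟩, hv⟩ := h x
    refine ⟨c • v, ⟨s, hc₁, fun y hy => ?_⟩, ?_⟩
    · have : (c • v : L2 X) y = c • v y := rfl
      rw [this, h0 y hy, smul_zero]
    · have : (c • T) (dirac x) - c • v = c • (T (dirac x) - v) := by
        simp [smul_sub]
      rw [this, norm_smul]
      calc ‖c‖ * ‖T (dirac x) - v‖ < ‖c‖ * (ε/‖c‖) := by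
            exact mul_lt_mul_of_pos_left hv hcn
        _ = ε := by rw [mul_comm, div_mul_cancel₀ _ hcn.ne']

lemma UA_comp {X : Type*} {T S : L2 X →L[ℂ] L2 X} (hT : UniformApprox T)
    (hS : UniformApprox S) : UniformApprox (T.comp S) := by
  classical
  intro ε hε
  set C : ℝ := ‖T‖ + 1 with hC
  have hCpos : 0 < C := by positivity
  obtain ⟨M₁, h₁⟩ := hS (ε/(2*C)) (by positivity)
  set B : ℝ := ‖S‖ + ε/(2*C) with hB
  have hBpos : 0 < B := by positivity
  obtain ⟨M₂, h₂⟩ := hT (ε/(4*(M₁+1)*B)) (by positivity)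
  refine ⟨M₁ * M₂, fun x => ?_⟩
  obtain ⟨v, ⟨s, hsc, hs0⟩, hv⟩ := h₁ x
  choose w hsupp hw using h₂
  choose t htc ht0 using hsupp
  refine ⟨∑ y ∈ s, v y • w y, ⟨s.biUnion t, ?_, ?_⟩, ?_⟩
  · calc (s.biUnion t).card ≤ ∑ y ∈ s, (t y).card := Finset.card_biUnion_le
      _ ≤ ∑ _y ∈ s, M₂ := Finset.sum_le_sum (fun y _ => htc y)
      _ = s.card * M₂ := by rw [Finset.sum_const, smul_eq_mul]
      _ ≤ M₁ * M₂ := Nat.mul_le_mul_right _ hsc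
  · intro z hz
    have : ((∑ y ∈ s, v y • w y : L2 X) : ∀ _ : X, ℂ) z = ∑ y ∈ s, v y • (w y : L2 X) z := by
      rw [lp.coeFn_sum, Finset.sum_apply]; rfl
    rw [this]
    refine Finset.sum_eq_zero fun y hy => ?_
    have : z ∉ t y := fun h => hz (Finset.mem_biUnion.mpr ⟨y, hy, h⟩)
    rw [ht0 y z this, smul_zero]
  · have hvB : ‖v‖ ≤ B := by
      have h1 : ‖v‖ - ‖S (dirac x)‖ ≤ ‖v - S (dirac x)‖ := norm_sub_norm_le _ _
      have h2 : ‖v - S (dirac x)‖ = ‖S (dirac x) - v‖ := norm_sub_rev _ _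
      have h3 : ‖S (dirac x)‖ ≤ ‖S‖ := by
        calc ‖S (dirac x)‖ ≤ ‖S‖ * ‖dirac x‖ := S.le_opNorm _
          _ = ‖S‖ := by rw [norm_dirac, mul_one]
      rw [hB]; linarith [hv]
    have key : T (S (dirac x)) - ∑ y ∈ s, v y • w y
        = T (S (dirac x) - v) + ∑ y ∈ s, v y • (T (dirac y) - w y) := by
      have hveq : v = ∑ y ∈ s, v y • dirac y := eq_sum_dirac v s hs0
      have : T v = ∑ y ∈ s, v y • T (dirac y) := by
        conv_lhs => rw [hveq]
        rw [map_sum]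
        exact Finset.sum_congr rfl fun y _ => by rw [map_smul]
      rw [map_sub, this, Finset.sum_congr rfl fun y _ => (smul_sub (v y) (T (dirac y)) (w y)),
        Finset.sum_sub_distrib]
      abel
    have e1 : ‖T (S (dirac x) - v)‖ ≤ ε/2 := by
      calc ‖T (S (dirac x) - v)‖ ≤ ‖T‖ * ‖S (dirac x) - v‖ := T.le_opNorm _
        _ ≤ C * (ε/(2*C)) := by
            apply mul_le_mul (by rw [hC]; linarith) hv.le (norm_nonneg _) hCpos.le
        _ = ε/2 := by field_simp
    have e2 : ‖∑ y ∈ s, v y • (T (dirac y) - w y)‖ ≤ ε/4 := by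
      have step : ∀ y ∈ s, ‖v y • (T (dirac y) - w y)‖ ≤ B * (ε/(4*(M₁+1)*B)) := by
        intro y _
        rw [norm_smul]
        apply mul_le_mul _ (hw y).le (norm_nonneg _) hBpos.le
        exact (lp.norm_apply_le_norm (by norm_num) v y).trans hvB
      calc ‖∑ y ∈ s, v y • (T (dirac y) - w y)‖
          ≤ ∑ y ∈ s, ‖v y • (T (dirac y) - w y)‖ := norm_sum_le _ _
        _ ≤ ∑ _y ∈ s, B * (ε/(4*(M₁+1)*B)) := Finset.sum_le_sum step
        _ = s.card * (B * (ε/(4*(M₁+1)*B))) := by rw [Finset.sum_const, nsmul_eq_mul]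
        _ ≤ (M₁+1) * (B * (ε/(4*(M₁+1)*B))) := by
            apply mul_le_mul_of_nonneg_right _ (by positivity)
            exact_mod_cast le_trans (Nat.cast_le.mpr hsc) (by linarith)
        _ = ε/4 := by field_simp
    have hcomp : (T.comp S) (dirac x) = T (S (dirac x)) := rfl
    rw [hcomp, key]
    calc ‖T (S (dirac x) - v) + ∑ y ∈ s, v y • (T (dirac y) - w y)‖
        ≤ ‖T (S (dirac x) - v)‖ + ‖∑ y ∈ s, v y • (T (dirac y) - w y)‖ := norm_add_le _ _
      _ ≤ ε/2 + ε/4 := add_le_add e1 e2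
      _ < ε := by linarith

lemma UA_of_approx {X : Type*} {T : L2 X →L[ℂ] L2 X}
    (h : ∀ δ : ℝ, 0 < δ → ∃ S : L2 X →L[ℂ] L2 X, UniformApprox S ∧ ‖T - S‖ < δ) :
    UniformApprox T := by
  intro ε hε
  obtain ⟨S, hS, hTS⟩ := h (ε/2) (by positivity)
  obtain ⟨M, hM⟩ := hS (ε/2) (by positivity)
  refine ⟨M, fun x => ?_⟩
  obtain ⟨v, hsupp, hv⟩ := hM x
  refine ⟨v, hsupp, ?_⟩
  have heq : T (dirac x) - v = (T - S) (dirac x) + (S (dirac x) - v) := by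
    simp [ContinuousLinearMap.sub_apply]
  rw [heq]
  calc ‖(T - S) (dirac x) + (S (dirac x) - v)‖
      ≤ ‖(T - S) (dirac x)‖ + ‖S (dirac x) - v‖ := norm_add_le _ _
    _ ≤ ‖T - S‖ * ‖dirac x‖ + ‖S (dirac x) - v‖ := by
        gcongr; exact (T - S).le_opNorm _
    _ < ε/2 + ε/2 := by
        rw [norm_dirac, mul_one]; exact add_lt_add hTS hv
    _ = ε := by ring

/-- The block diagonal algebra Q(X): operators such that both T and T* have the uniform
finite-approximation property (equivalently, ℓ²(X^ω) is invariant under T^ω and (T*)^ω). -/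
def QAlg (X : Type*) : Set (L2 X →L[ℂ] L2 X) :=
  {T | UniformApprox T ∧ UniformApprox (ContinuousLinearMap.adjoint T)}

/-- Q(X) is a C*-subalgebra of B(ℓ²(X)): it is closed under sums, products,
scalar multiples and adjoints, and is norm-closed. -/
theorem QAlg_is_CstarSubalgebra (X : Type*) :
    (∀ T ∈ QAlg X, ∀ S ∈ QAlg X, T + S ∈ QAlg X) ∧
    (∀ T ∈ QAlg X, ∀ S ∈ QAlg X, T.comp S ∈ QAlg X) ∧
    (∀ (c : ℂ), ∀ T ∈ QAlg X, c • T ∈ QAlg X) ∧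
    (∀ T ∈ QAlg X, ContinuousLinearMap.adjoint T ∈ QAlg X) ∧
    IsClosed (QAlg X) := by
  refine ⟨?_, ?_, ?_, ?_, ?_⟩
  · rintro T ⟨hT1, hT2⟩ S ⟨hS1, hS2⟩
    exact ⟨UA_add hT1 hS1, by rw [map_add]; exact UA_add hT2 hS2⟩
  · rintro T ⟨hT1, hT2⟩ S ⟨hS1, hS2⟩
    exact ⟨UA_comp hT1 hS1,
      by rw [ContinuousLinearMap.adjoint_comp]; exact UA_comp hS2 hT2⟩
  · rintro c T ⟨hT1, hT2⟩
    refine ⟨UA_smul c hT1, ?_⟩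
    have : ContinuousLinearMap.adjoint (c • T)
        = (starRingEnd ℂ) c • ContinuousLinearMap.adjoint T := map_smulₛₗ _ _ _
    rw [this]
    exact UA_smul _ hT2
  · rintro T ⟨hT1, hT2⟩
    exact ⟨hT2, by rw [ContinuousLinearMap.adjoint_adjoint]; exact hT1⟩
  · refine isClosed_of_closure_subset fun T hT => ?_
    have hap : ∀ δ : ℝ, 0 < δ → ∃ S ∈ QAlg X, ‖T - S‖ < δ := by
      intro δ hδ
      rcases Metric.mem_closure_iff.mp hT δ hδ with ⟨S, hS, hd⟩
      exact ⟨S, hS, by rwa [← dist_eq_norm]⟩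
    constructor
    · refine UA_of_approx fun δ hδ => ?_
      obtain ⟨S, hS, h⟩ := hap δ hδ
      exact ⟨S, hS.1, h⟩
    · refine UA_of_approx fun δ hδ => ?_
      obtain ⟨S, hS, h⟩ := hap δ hδ
      refine ⟨ContinuousLinearMap.adjoint S, hS.2, ?_⟩
      have : ContinuousLinearMap.adjoint T - ContinuousLinearMap.adjoint S
          = ContinuousLinearMap.adjoint (T - S) := (map_sub _ _ _).symm
      rw [this]
      calc ‖ContinuousLinearMap.adjoint (T - S)‖ = ‖T - S‖ :=
            LinearIsometryEquiv.norm_map ContinuousLinearMap.adjoint (T - S)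
        _ < δ := h
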